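/- arXiv:2605.09315 — 3 statements merged into one kernel-verified Lean document; each statement's English description precedes it below -/
import Mathlib

section
/- Let H, M be symmetric matrices on ℝ^n with H positive semidefinite and M positive definite, λ > 0, g ∈ ℝ^n, and set Δ_λ = -(H + λM)⁻¹ g. Then Δ_λᵀ M Δ_λ ≤ λ⁻² · gᵀ M⁻¹ g. -/
/-!
Since `g = -(H + λM)Δ`, expanding gives
`gᵀM⁻¹g = (HΔ)ᵀM⁻¹(HΔ) + 2λ ΔᵀHΔ + λ² ΔᵀMΔ`, and the first two terms are nonnegative
because `M⁻¹` and `H` are positive semidefinite.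
-/

open Matrix

variable {ι R : Type*} [Fintype ι] [DecidableEq ι]

lemma Matrix.IsSymm.mulVec_dotProduct_inv_mulVec [CommRing R] {M : Matrix ι ι R}
    (hM : M.IsSymm) (hdet : IsUnit M.det) (x w : ι → R) :
    (M *ᵥ x) ⬝ᵥ (M⁻¹ *ᵥ w) = x ⬝ᵥ w := by
  rw [dotProduct_mulVec, ← mulVec_transpose, transpose_nonsing_inv, hM.eq, mulVec_mulVec,
    nonsing_inv_mul _ hdet, one_mulVec]

lemma Matrix.IsSymm.add_smul_mulVec_dotProduct_inv_mulVec [CommRing R] {M : Matrix ι ι R}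
    (hM : M.IsSymm) (hdet : IsUnit M.det) (H : Matrix ι ι R) (c : R) (x : ι → R) :
    ((H + c • M) *ᵥ x) ⬝ᵥ (M⁻¹ *ᵥ ((H + c • M) *ᵥ x)) =
      (H *ᵥ x) ⬝ᵥ (M⁻¹ *ᵥ (H *ᵥ x)) + 2 * c * (x ⬝ᵥ H *ᵥ x) + c ^ 2 * (x ⬝ᵥ M *ᵥ x) := by
  have hMinv : M⁻¹ *ᵥ (M *ᵥ x) = x := by
    rw [mulVec_mulVec, nonsing_inv_mul _ hdet, one_mulVec]
  simp only [add_mulVec, smul_mulVec, mulVec_add, mulVec_smul, hMinv, add_dotProduct,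
    dotProduct_add, smul_dotProduct, dotProduct_smul, hM.mulVec_dotProduct_inv_mulVec hdet,
    smul_eq_mul, dotProduct_comm (H *ᵥ x) x, dotProduct_comm (M *ᵥ x) x]
  ring

lemma Matrix.PosDef.sq_mul_dotProduct_mulVec_le {H M : Matrix ι ι ℝ} (hH : H.PosSemidef)
    (hM : M.PosDef) {c : ℝ} (hc : 0 ≤ c) (x : ι → ℝ) :
    c ^ 2 * (x ⬝ᵥ M *ᵥ x) ≤ ((H + c • M) *ᵥ x) ⬝ᵥ (M⁻¹ *ᵥ ((H + c • M) *ᵥ x)) := by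
  have hsymm : M.IsSymm := by simpa using hM.isHermitian
  rw [hsymm.add_smul_mulVec_dotProduct_inv_mulVec hM.det_pos.ne'.isUnit]
  have hHx : 0 ≤ x ⬝ᵥ H *ᵥ x := by simpa using hH.dotProduct_mulVec_nonneg x
  have hMinv : 0 ≤ (H *ᵥ x) ⬝ᵥ (M⁻¹ *ᵥ (H *ᵥ x)) := by
    simpa using hM.inv.posSemidef.dotProduct_mulVec_nonneg (H *ᵥ x)
  have hcross : 0 ≤ 2 * c * (x ⬝ᵥ H *ᵥ x) := by positivity
  linarith

theorem stmt_4 {n : ℕ} (H M : Matrix (Fin n) (Fin n) ℝ)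
    (hH : H.PosSemidef) (hM : M.PosDef) (lam : ℝ) (hlam : 0 < lam)
    (g : Fin n → ℝ)
    (Δ : Fin n → ℝ) (hΔ : Δ = -((H + lam • M)⁻¹.mulVec g)) :
    Δ ⬝ᵥ M.mulVec Δ ≤ lam⁻¹ ^ 2 * (g ⬝ᵥ M⁻¹.mulVec g) := by
  have hA : IsUnit (H + lam • M).det :=
    (PosDef.posSemidef_add hH (hM.smul hlam)).det_pos.ne'.isUnit
  have hAΔ : (H + lam • M) *ᵥ Δ = -g := by
    rw [hΔ, mulVec_neg, mulVec_mulVec, mul_nonsing_inv _ hA, one_mulVec]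
  have hbound := hM.sq_mul_dotProduct_mulVec_le hH hlam.le Δ
  rw [hAΔ, mulVec_neg, neg_dotProduct, dotProduct_neg, neg_neg] at hbound
  rw [inv_pow, ← div_eq_inv_mul, le_div_iff₀ (by positivity), mul_comm]
  exact hbound
end

section
/- Let H_old, M be symmetric matrices on ℝ^n with H_old positive semidefinite, M positive definite, and suppose there exists c > 0 with H_old ≼ cM (i.e. cM - H_old is positive semidefinite). Let H be positive semidefinite symmetric, λ > 0, g ∈ ℝ^n, and Δ_λ = -(H + λM)⁻¹ g. Then (1/2)Δ_λᵀ H_old Δ_λ ≤ (c/(2λ²)) · gᵀ M⁻¹ g. -/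
/-!
Put `y = (H + λM)⁻¹ g` and `z = M⁻¹ g`. Since `H ⪰ 0`,
`λ yᵀMy ≤ yᵀ(H + λM)y = yᵀg = yᵀMz`, and expanding `0 ≤ (λy - z)ᵀM(λy - z)` with this gives
`λ² yᵀMy ≤ zᵀMz = gᵀM⁻¹g`. The claim follows from `Δᵀ H_old Δ = yᵀ H_old y ≤ c yᵀMy`.
-/

open Matrix

namespace Matrix

variable {ι : Type*} [Fintype ι]

theorem dotProduct_mulVec_le_of_posSemidef_smul_sub {N M : Matrix ι ι ℝ} {c : ℝ}
    (h : (c • M - N).PosSemidef) (x : ι → ℝ) :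
    x ⬝ᵥ N *ᵥ x ≤ c * (x ⬝ᵥ M *ᵥ x) := by
  have := h.dotProduct_mulVec_nonneg x
  rw [star_trivial, sub_mulVec, smul_mulVec, dotProduct_sub, dotProduct_smul, smul_eq_mul] at this
  linarith

theorem PosSemidef.sq_mul_dotProduct_mulVec_le {M : Matrix ι ι ℝ} (hM : M.PosSemidef)
    {t : ℝ} (ht : 0 ≤ t) {y z : ι → ℝ} (h : t * (y ⬝ᵥ M *ᵥ y) ≤ y ⬝ᵥ M *ᵥ z) :
    t ^ 2 * (y ⬝ᵥ M *ᵥ y) ≤ z ⬝ᵥ M *ᵥ z := by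
  have hsymm : z ⬝ᵥ M *ᵥ y = y ⬝ᵥ M *ᵥ z := by
    rw [← dotProduct_transpose_mulVec, ← conjTranspose_eq_transpose_of_trivial, hM.isHermitian.eq]
  have hexpand : (t • y - z) ⬝ᵥ M *ᵥ (t • y - z)
      = t ^ 2 * (y ⬝ᵥ M *ᵥ y) - 2 * t * (y ⬝ᵥ M *ᵥ z) + z ⬝ᵥ M *ᵥ z := by
    simp only [mulVec_sub, mulVec_smul, dotProduct_sub, sub_dotProduct, dotProduct_smul,
      smul_dotProduct, smul_eq_mul, hsymm]
    ring
  have := hM.dotProduct_mulVec_nonneg (t • y - z)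
  rw [star_trivial, hexpand] at this
  nlinarith

variable [DecidableEq ι]

theorem PosDef.mulVec_inv_mulVec {M : Matrix ι ι ℝ} (hM : M.PosDef) (v : ι → ℝ) :
    M *ᵥ M⁻¹ *ᵥ v = v := by
  rw [mulVec_mulVec, mul_nonsing_inv M ((isUnit_iff_isUnit_det M).mp hM.isUnit), one_mulVec]

theorem sq_mul_dotProduct_mulVec_inv_add_smul_le {H M : Matrix ι ι ℝ} (hH : H.PosSemidef)
    (hM : M.PosDef) {lam : ℝ} (hlam : 0 < lam) (g : ι → ℝ) :
    lam ^ 2 * ((H + lam • M)⁻¹ *ᵥ g ⬝ᵥ M *ᵥ (H + lam • M)⁻¹ *ᵥ g) ≤ g ⬝ᵥ M⁻¹ *ᵥ g := by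
  set y := (H + lam • M)⁻¹ *ᵥ g
  have hy : (H + lam • M) *ᵥ y = g :=
    (PosDef.posSemidef_add hH (hM.smul hlam)).mulVec_inv_mulVec g
  have hz : M *ᵥ M⁻¹ *ᵥ g = g := hM.mulVec_inv_mulVec g
  have hyz : lam * (y ⬝ᵥ M *ᵥ y) ≤ y ⬝ᵥ M *ᵥ M⁻¹ *ᵥ g := by
    have hHy := hH.dotProduct_mulVec_nonneg y
    rw [star_trivial] at hHy
    rw [hz, ← hy, add_mulVec, smul_mulVec, dotProduct_add, dotProduct_smul, smul_eq_mul]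
    linarith
  have := hM.posSemidef.sq_mul_dotProduct_mulVec_le hlam.le hyz
  rwa [hz, dotProduct_comm (M⁻¹ *ᵥ g)] at this

end Matrix

theorem stmt_5_general {n : ℕ} (Hold M H : Matrix (Fin n) (Fin n) ℝ)
    (hM : M.PosDef) (hH : H.PosSemidef)
    (c : ℝ) (hc : 0 < c) (hdom : (c • M - Hold).PosSemidef)
    (lam : ℝ) (hlam : 0 < lam) (g : Fin n → ℝ)
    (Δ : Fin n → ℝ) (hΔ : Δ = -((H + lam • M)⁻¹.mulVec g)) :
    (1/2) * (Δ ⬝ᵥ Hold.mulVec Δ) ≤ (c / (2 * lam ^ 2)) * (g ⬝ᵥ M⁻¹.mulVec g) := by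
  set y := (H + lam • M)⁻¹ *ᵥ g
  have hΔy : Δ ⬝ᵥ Hold *ᵥ Δ = y ⬝ᵥ Hold *ᵥ y := by
    rw [hΔ, mulVec_neg, neg_dotProduct, dotProduct_neg, neg_neg]
  have hHold := dotProduct_mulVec_le_of_posSemidef_smul_sub hdom y
  have hkey := sq_mul_dotProduct_mulVec_inv_add_smul_le hH hM hlam g
  calc 1 / 2 * (Δ ⬝ᵥ Hold *ᵥ Δ) ≤ 1 / 2 * (c * (y ⬝ᵥ M *ᵥ y)) := by rw [hΔy]; linarith
    _ = c / (2 * lam ^ 2) * (lam ^ 2 * (y ⬝ᵥ M *ᵥ y)) := by field_simp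
    _ ≤ c / (2 * lam ^ 2) * (g ⬝ᵥ M⁻¹ *ᵥ g) := by gcongr

theorem stmt_5 {n : ℕ} (Hold M H : Matrix (Fin n) (Fin n) ℝ)
    (hHold : Hold.PosSemidef) (hM : M.PosDef) (hH : H.PosSemidef)
    (c : ℝ) (hc : 0 < c) (hdom : (c • M - Hold).PosSemidef)
    (lam : ℝ) (hlam : 0 < lam) (g : Fin n → ℝ)
    (Δ : Fin n → ℝ) (hΔ : Δ = -((H + lam • M)⁻¹.mulVec g)) :
    (1/2) * (Δ ⬝ᵥ Hold.mulVec Δ) ≤ (c / (2 * lam ^ 2)) * (g ⬝ᵥ M⁻¹.mulVec g) :=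
  stmt_5_general Hold M H hM hH c hc hdom lam hlam g Δ hΔ
end

section
/- Let H, M be symmetric matrices on ℝ^n with H positive semidefinite and M positive definite, g ∈ ℝ^n, and 0 < λ₁ ≤ λ₂. Then Δ_{λ₂}ᵀ M Δ_{λ₂} ≤ Δ_{λ₁}ᵀ M Δ_{λ₁}, where Δ_λ = -(H + λM)⁻¹g; i.e., increasing the preservation strength λ decreases the M-norm of the CPE update. -/
/-!
Write `uᵢ = (H + λᵢ M)⁻¹ g` and `d = u₁ - u₂`. Subtracting the equations `(H + λᵢ M) uᵢ = g`
gives `H d = λ₂ M u₂ - λ₁ M u₁`; pairing with `d` and using the symmetry of `M` yields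
`(λ₂ - λ₁) (u₁ᵀ M u₁ - u₂ᵀ M u₂) = 2 dᵀ H d + (λ₁ + λ₂) dᵀ M d ≥ 0`.
-/

open Matrix

namespace Matrix

variable {n R : Type*} [Fintype n]

theorem mulVec_nonsing_inv_mulVec [CommRing R] [DecidableEq n] {A : Matrix n n R}
    (h : IsUnit A.det) (v : n → R) : A *ᵥ (A⁻¹ *ᵥ v) = v := by
  rw [mulVec_mulVec, mul_nonsing_inv _ h, one_mulVec]

theorem IsSymm.dotProduct_mulVec_comm [CommSemiring R] {M : Matrix n n R} (hM : M.IsSymm)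
    (x y : n → R) : x ⬝ᵥ M *ᵥ y = y ⬝ᵥ M *ᵥ x := by
  rw [dotProduct_mulVec, ← mulVec_transpose, hM.eq, dotProduct_comm]

theorem sub_mul_sub_dotProduct_mulVec_self_eq [CommRing R] {H M : Matrix n n R}
    (hM : M.IsSymm) {lam₁ lam₂ : R} {u₁ u₂ : n → R}
    (h : (H + lam₁ • M) *ᵥ u₁ = (H + lam₂ • M) *ᵥ u₂) :
    (lam₂ - lam₁) * (u₁ ⬝ᵥ M *ᵥ u₁ - u₂ ⬝ᵥ M *ᵥ u₂) =
      2 * ((u₁ - u₂) ⬝ᵥ H *ᵥ (u₁ - u₂)) + (lam₁ + lam₂) * ((u₁ - u₂) ⬝ᵥ M *ᵥ (u₁ - u₂)) := by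
  have hHd : H *ᵥ (u₁ - u₂) = lam₂ • M *ᵥ u₂ - lam₁ • M *ᵥ u₁ := by
    simp only [add_mulVec, smul_mulVec] at h
    rw [mulVec_sub]
    linear_combination h
  rw [hHd]
  simp only [mulVec_sub, dotProduct_sub, sub_dotProduct, dotProduct_smul, smul_eq_mul,
    hM.dotProduct_mulVec_comm u₂ u₁]
  ring

theorem dotProduct_mulVec_self_le_of_mulVec_eq [CommRing R] [LinearOrder R]
    [IsStrictOrderedRing R] [StarRing R] [TrivialStar R] {H M : Matrix n n R}
    (hH : H.PosSemidef) (hM : M.PosSemidef) {lam₁ lam₂ : R} (hlam : 0 ≤ lam₁ + lam₂)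
    (h₁₂ : lam₁ < lam₂) {u₁ u₂ : n → R} (h : (H + lam₁ • M) *ᵥ u₁ = (H + lam₂ • M) *ᵥ u₂) :
    u₂ ⬝ᵥ M *ᵥ u₂ ≤ u₁ ⬝ᵥ M *ᵥ u₁ := by
  have hH₀ := hH.dotProduct_mulVec_nonneg (u₁ - u₂)
  have hM₀ := hM.dotProduct_mulVec_nonneg (u₁ - u₂)
  simp only [star_trivial] at hH₀ hM₀
  refine sub_nonneg.1 (nonneg_of_mul_nonneg_right ?_ (sub_pos.2 h₁₂))
  rw [sub_mul_sub_dotProduct_mulVec_self_eq (isHermitian_iff_isSymm.1 hM.isHermitian) h]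
  positivity

end Matrix

theorem stmt_18 {n : ℕ} (H M : Matrix (Fin n) (Fin n) ℝ)
    (hH : H.PosSemidef) (hM : M.PosDef) (g : Fin n → ℝ)
    (lam₁ lam₂ : ℝ) (h₁ : 0 < lam₁) (h₁₂ : lam₁ ≤ lam₂)
    (Δ : ℝ → (Fin n → ℝ)) (hΔ : ∀ lam, Δ lam = -((H + lam • M)⁻¹.mulVec g)) :
    Δ lam₂ ⬝ᵥ M.mulVec (Δ lam₂) ≤ Δ lam₁ ⬝ᵥ M.mulVec (Δ lam₁) := by
  have hsolve (lam : ℝ) (hlam : 0 < lam) : (H + lam • M) *ᵥ ((H + lam • M)⁻¹ *ᵥ g) = g :=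
    mulVec_nonsing_inv_mulVec
      ((isUnit_iff_isUnit_det _).1 (PosDef.posSemidef_add hH (hM.smul hlam)).isUnit) g
  rcases h₁₂.eq_or_lt with rfl | hlt
  · exact le_rfl
  simp only [hΔ, neg_dotProduct, mulVec_neg, dotProduct_neg, neg_neg]
  exact dotProduct_mulVec_self_le_of_mulVec_eq hH hM.posSemidef (by linarith) hlt
    ((hsolve lam₁ h₁).trans (hsolve lam₂ (h₁.trans hlt)).symm)
end
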